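/- Suppose the matrices A, B_w, B_d, C_v, D_vw, D_vd, C_e, D_ew, D_ed, a symmetric positive semidefinite P, a scalar λ ≥ 0, and a symmetric M satisfy the dissipativity LMI condition with the passivity supply-rate matrix X = [[0, ½I], [½I, 0]] (so that [d; e]ᵀ X [d; e] = dᵀe). Then for every admissible trajectory (x, w, d, v, e) of the linear system whose uncertainty signals satisfy the static integral quadratic constraint defined by M, and every T ≥ 0, one has ∫₀ᵀ d(t)ᵀ e(t) dt ≥ x(T)ᵀ P x(T) − x(0)ᵀ P x(0) ≥ − x(0)ᵀ P x(0). -/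

import Mathlib

/-!
Along a trajectory the storage function `V = xᵀ P x` has derivative `[x; w; d]ᵀ F₀ [x; w; d]`,
so testing the LMI on `[x(t); w(t); d(t)]` gives the pointwise dissipation inequality
`V' + λ [v; w]ᵀ M [v; w] ≤ dᵀ e`. Integrating over `[0, T]` and dropping the IQC term, whose
integral is nonnegative, gives `V(T) - V(0) ≤ ∫₀ᵀ dᵀ e`; the second inequality is `V(T) ≥ 0`.
-/

open Matrix

/-- Negative semidefiniteness of a real matrix: `zᵀ N z ≤ 0` for all `z`. -/
def IsNegSemidef {m : Type*} [Fintype m] (N : Matrix m m ℝ) : Prop :=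
  ∀ z : m → ℝ, z ⬝ᵥ N *ᵥ z ≤ 0

/-- The dissipativity LMI condition
`[[AᵀP + PA, P Bw, P Bd], [Bwᵀ P, 0, 0], [Bdᵀ P, 0, 0]] + λ Hᵀ M H − Gᵀ X G ⪯ 0` with
`H = [[Cv, Dvw, Dvd], [0, I, 0]]` and `G = [[0, 0, I], [Ce, Dew, Ded]]`. -/
def DissLMI {ιn ιw ιd ιv ιe : Type*} [Fintype ιn] [Fintype ιw] [Fintype ιd]
    [Fintype ιv] [Fintype ιe] [DecidableEq ιw] [DecidableEq ιd]
    (A : Matrix ιn ιn ℝ) (Bw : Matrix ιn ιw ℝ) (Bd : Matrix ιn ιd ℝ)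
    (Cv : Matrix ιv ιn ℝ) (Dvw : Matrix ιv ιw ℝ) (Dvd : Matrix ιv ιd ℝ)
    (Ce : Matrix ιe ιn ℝ) (Dew : Matrix ιe ιw ℝ) (Ded : Matrix ιe ιd ℝ)
    (P : Matrix ιn ιn ℝ) (lam : ℝ)
    (M : Matrix (ιv ⊕ ιw) (ιv ⊕ ιw) ℝ)
    (X : Matrix (ιd ⊕ ιe) (ιd ⊕ ιe) ℝ) : Prop :=
  let H : Matrix (ιv ⊕ ιw) (ιn ⊕ (ιw ⊕ ιd)) ℝ :=
    fromBlocks Cv (fromCols Dvw Dvd) 0 (fromCols 1 0)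
  let G : Matrix (ιd ⊕ ιe) (ιn ⊕ (ιw ⊕ ιd)) ℝ :=
    fromBlocks 0 (fromCols 0 1) Ce (fromCols Dew Ded)
  let F0 : Matrix (ιn ⊕ (ιw ⊕ ιd)) (ιn ⊕ (ιw ⊕ ιd)) ℝ :=
    fromBlocks (Aᵀ * P + P * A) (fromCols (P * Bw) (P * Bd))
      (fromRows (Bwᵀ * P) (Bdᵀ * P)) 0
  IsNegSemidef (F0 + lam • (Hᵀ * M * H) - Gᵀ * X * G)

open Set

section QuadraticForm

variable {R ι κ : Type*} [CommSemiring R] [Fintype ι] [Fintype κ]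

theorem dotProduct_transpose_mul_mul_mulVec (H : Matrix κ ι R) (Q : Matrix κ κ R) (z : ι → R) :
    z ⬝ᵥ (Hᵀ * Q * H) *ᵥ z = (H *ᵥ z) ⬝ᵥ Q *ᵥ (H *ᵥ z) := by
  rw [← mulVec_mulVec, ← mulVec_mulVec, dotProduct_mulVec, vecMul_transpose]

theorem sumElim_dotProduct_fromBlocks_half_mulVec [DecidableEq ι] (d e : ι → ℝ) :
    Sum.elim d e ⬝ᵥ fromBlocks 0 (((1:ℝ)/2) • (1 : Matrix ι ι ℝ)) (((1:ℝ)/2) • 1) 0 *ᵥ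
      Sum.elim d e = d ⬝ᵥ e := by
  simp only [fromBlocks_mulVec, Sum.elim_comp_inl, Sum.elim_comp_inr, zero_mulVec, smul_mulVec,
    one_mulVec, zero_add, add_zero, sumElim_dotProduct_sumElim, dotProduct_smul, smul_eq_mul,
    dotProduct_comm e d]
  ring

end QuadraticForm

theorem DissLMI.dissipation_inequality {ιn ιw ιd ιv ιe : Type*} [Fintype ιn] [Fintype ιw]
    [Fintype ιd] [Fintype ιv] [Fintype ιe] [DecidableEq ιw] [DecidableEq ιd]
    {A : Matrix ιn ιn ℝ} {Bw : Matrix ιn ιw ℝ} {Bd : Matrix ιn ιd ℝ}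
    {Cv : Matrix ιv ιn ℝ} {Dvw : Matrix ιv ιw ℝ} {Dvd : Matrix ιv ιd ℝ}
    {Ce : Matrix ιe ιn ℝ} {Dew : Matrix ιe ιw ℝ} {Ded : Matrix ιe ιd ℝ}
    {P : Matrix ιn ιn ℝ} {lam : ℝ} {M : Matrix (ιv ⊕ ιw) (ιv ⊕ ιw) ℝ}
    {X : Matrix (ιd ⊕ ιe) (ιd ⊕ ιe) ℝ}
    (hLMI : DissLMI A Bw Bd Cv Dvw Dvd Ce Dew Ded P lam M X)
    (x : ιn → ℝ) (w : ιw → ℝ) (d : ιd → ℝ) {v : ιv → ℝ} {e : ιe → ℝ}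
    (hv : v = Cv *ᵥ x + Dvw *ᵥ w + Dvd *ᵥ d) (he : e = Ce *ᵥ x + Dew *ᵥ w + Ded *ᵥ d) :
    (A *ᵥ x + Bw *ᵥ w + Bd *ᵥ d) ⬝ᵥ P *ᵥ x + x ⬝ᵥ P *ᵥ (A *ᵥ x + Bw *ᵥ w + Bd *ᵥ d) +
        lam * (Sum.elim v w ⬝ᵥ M *ᵥ Sum.elim v w) ≤
      Sum.elim d e ⬝ᵥ X *ᵥ Sum.elim d e := by
  set z := Sum.elim x (Sum.elim w d)
  have hF0 : z ⬝ᵥ fromBlocks (Aᵀ * P + P * A) (fromCols (P * Bw) (P * Bd))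
        (fromRows (Bwᵀ * P) (Bdᵀ * P)) 0 *ᵥ z =
      (A *ᵥ x + Bw *ᵥ w + Bd *ᵥ d) ⬝ᵥ P *ᵥ x + x ⬝ᵥ P *ᵥ (A *ᵥ x + Bw *ᵥ w + Bd *ᵥ d) := by
    simp only [z, fromBlocks_mulVec, Sum.elim_comp_inl, Sum.elim_comp_inr,
      fromCols_mulVec_sumElim, fromRows_mulVec, zero_mulVec, add_zero, sumElim_dotProduct_sumElim,
      add_mulVec, mulVec_add, dotProduct_add, add_dotProduct, ← mulVec_mulVec,
      dotProduct_transpose_mulVec]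
    rw [dotProduct_comm (A *ᵥ x), dotProduct_comm (Bw *ᵥ w), dotProduct_comm (Bd *ᵥ d)]
    ring
  have hH : fromBlocks Cv (fromCols Dvw Dvd) 0 (fromCols 1 0) *ᵥ z = Sum.elim v w := by
    simp [z, hv, fromBlocks_mulVec, add_assoc]
  have hG : fromBlocks 0 (fromCols 0 1) Ce (fromCols Dew Ded) *ᵥ z = Sum.elim d e := by
    simp [z, he, fromBlocks_mulVec, add_assoc]
  have h := hLMI z
  simp only [sub_mulVec, add_mulVec, smul_mulVec, dotProduct_add, dotProduct_sub,
    dotProduct_smul, smul_eq_mul] at h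
  rw [dotProduct_transpose_mul_mul_mulVec, dotProduct_transpose_mul_mul_mulVec, hH, hG, hF0] at h
  linarith

@[fun_prop]
theorem ContinuousOn.sumElim_vec {X ι κ : Type*} [TopologicalSpace X] {f : X → ι → ℝ}
    {g : X → κ → ℝ} {s : Set X} (hf : ContinuousOn f s) (hg : ContinuousOn g s) :
    ContinuousOn (fun t => Sum.elim (f t) (g t)) s :=
  continuousOn_pi.2 fun | .inl i => continuousOn_apply i _ |>.comp hf (mapsTo_univ _ _)
                        | .inr i => continuousOn_apply i _ |>.comp hg (mapsTo_univ _ _)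

section Calculus

variable {ι κ : Type*} [Fintype ι] [Fintype κ] {s : Set ℝ} {t : ℝ}

theorem HasDerivWithinAt.dotProduct {f g : ℝ → ι → ℝ} {f' g' : ι → ℝ}
    (hf : HasDerivWithinAt f f' s t) (hg : HasDerivWithinAt g g' s t) :
    HasDerivWithinAt (fun t => f t ⬝ᵥ g t) (f' ⬝ᵥ g t + f t ⬝ᵥ g') s t := by
  have := HasDerivWithinAt.fun_sum (u := Finset.univ) fun i _ =>
    (hasDerivWithinAt_pi.mp hf i).fun_mul (hasDerivWithinAt_pi.mp hg i)
  simpa only [_root_.dotProduct, Finset.sum_add_distrib] using this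

theorem HasDerivWithinAt.matrix_mulVec (A : Matrix κ ι ℝ) {f : ℝ → ι → ℝ} {f' : ι → ℝ}
    (hf : HasDerivWithinAt f f' s t) :
    HasDerivWithinAt (fun t => A *ᵥ f t) (A *ᵥ f') s t :=
  (mulVecLin A).toContinuousLinearMap.hasFDerivAt.comp_hasDerivWithinAt t hf

end Calculus

theorem sub_le_integral_of_hasDeriv_right_of_le_sub_mul {V V' σ q : ℝ → ℝ} {a b lam : ℝ}
    (hab : a ≤ b) (hV : ContinuousOn V (Icc a b))
    (hV' : ∀ t ∈ Ioo a b, HasDerivWithinAt V (V' t) (Ioi t) t)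
    (hσ : ContinuousOn σ (Icc a b)) (hq : ContinuousOn q (Icc a b)) (hlam : 0 ≤ lam)
    (hq_int : 0 ≤ ∫ t in a..b, q t) (hdiss : ∀ t ∈ Ioo a b, V' t ≤ σ t - lam * q t) :
    V b - V a ≤ ∫ t in a..b, σ t := by
  have hbound := intervalIntegral.sub_le_integral_of_hasDeriv_right_of_le
    (φ := fun t => σ t - lam * q t) hab hV hV' (hσ.sub (hq.const_mul lam)).integrableOn_Icc hdiss
  rw [intervalIntegral.integral_sub (hσ.intervalIntegrable_of_Icc hab)
      ((hq.const_mul lam).intervalIntegrable_of_Icc hab), intervalIntegral.integral_const_mul]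
    at hbound
  linarith [mul_nonneg hlam hq_int]

theorem statement4_general {n nw nd nv : ℕ}
    (A : Matrix (Fin n) (Fin n) ℝ) (Bw : Matrix (Fin n) (Fin nw) ℝ)
    (Bd : Matrix (Fin n) (Fin nd) ℝ)
    (Cv : Matrix (Fin nv) (Fin n) ℝ) (Dvw : Matrix (Fin nv) (Fin nw) ℝ)
    (Dvd : Matrix (Fin nv) (Fin nd) ℝ)
    (Ce : Matrix (Fin nd) (Fin n) ℝ) (Dew : Matrix (Fin nd) (Fin nw) ℝ)
    (Ded : Matrix (Fin nd) (Fin nd) ℝ)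
    (P : Matrix (Fin n) (Fin n) ℝ) (lam : ℝ)
    (M : Matrix (Fin nv ⊕ Fin nw) (Fin nv ⊕ Fin nw) ℝ)
    (hP : P.PosSemidef) (hlam : 0 ≤ lam)
    (hLMI : DissLMI A Bw Bd Cv Dvw Dvd Ce Dew Ded P lam M
      (fromBlocks 0 (((1:ℝ)/2) • (1 : Matrix (Fin nd) (Fin nd) ℝ))
        (((1:ℝ)/2) • (1 : Matrix (Fin nd) (Fin nd) ℝ)) 0))
    (x : ℝ → Fin n → ℝ) (w : ℝ → Fin nw → ℝ) (d : ℝ → Fin nd → ℝ)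
    (v : ℝ → Fin nv → ℝ) (e : ℝ → Fin nd → ℝ)
    (hw : ContinuousOn w (Set.Ici 0)) (hd : ContinuousOn d (Set.Ici 0))
    (hx : ∀ t ∈ Set.Ici (0:ℝ),
      HasDerivWithinAt x (A *ᵥ x t + Bw *ᵥ w t + Bd *ᵥ d t) (Set.Ici 0) t)
    (hv : ∀ t, v t = Cv *ᵥ x t + Dvw *ᵥ w t + Dvd *ᵥ d t)
    (he : ∀ t, e t = Ce *ᵥ x t + Dew *ᵥ w t + Ded *ᵥ d t)
    (hIQC : ∀ T, 0 ≤ T → 0 ≤ ∫ t in (0:ℝ)..T,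
      Sum.elim (v t) (w t) ⬝ᵥ M *ᵥ Sum.elim (v t) (w t)) :
    ∀ T, 0 ≤ T →
      (x T ⬝ᵥ P *ᵥ x T - x 0 ⬝ᵥ P *ᵥ x 0 ≤ ∫ t in (0:ℝ)..T, d t ⬝ᵥ e t) ∧
      (-(x 0 ⬝ᵥ P *ᵥ x 0) ≤ x T ⬝ᵥ P *ᵥ x T - x 0 ⬝ᵥ P *ᵥ x 0) := by
  intro T hT
  have hIcc : Icc 0 T ⊆ Ici (0:ℝ) := fun t ht => ht.1
  have hxc : ContinuousOn x (Ici 0) := fun t ht => (hx t ht).continuousWithinAt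
  have hvc : ContinuousOn v (Ici 0) := by rw [funext hv]; fun_prop
  have hec : ContinuousOn e (Ici 0) := by rw [funext he]; fun_prop
  have hstorage : ∀ t ∈ Ioo 0 T, HasDerivWithinAt (fun t => x t ⬝ᵥ P *ᵥ x t)
      ((A *ᵥ x t + Bw *ᵥ w t + Bd *ᵥ d t) ⬝ᵥ P *ᵥ x t +
        x t ⬝ᵥ P *ᵥ (A *ᵥ x t + Bw *ᵥ w t + Bd *ᵥ d t)) (Ioi t) t := fun t ht =>
    have hxt := (hx t ht.1.le).mono fun s hs => ht.1.le.trans hs.le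
    hxt.dotProduct (hxt.matrix_mulVec P)
  have hdissipation : ∀ t ∈ Ioo 0 T, (A *ᵥ x t + Bw *ᵥ w t + Bd *ᵥ d t) ⬝ᵥ P *ᵥ x t +
      x t ⬝ᵥ P *ᵥ (A *ᵥ x t + Bw *ᵥ w t + Bd *ᵥ d t) ≤
        d t ⬝ᵥ e t - lam * (Sum.elim (v t) (w t) ⬝ᵥ M *ᵥ Sum.elim (v t) (w t)) := fun t _ => by
    have h := hLMI.dissipation_inequality (x t) (w t) (d t) (hv t) (he t)
    rw [sumElim_dotProduct_fromBlocks_half_mulVec] at h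
    linarith
  have hVT : 0 ≤ x T ⬝ᵥ P *ᵥ x T := by simpa using hP.dotProduct_mulVec_nonneg (x T)
  refine ⟨sub_le_integral_of_hasDeriv_right_of_le_sub_mul hT ?_ hstorage ?_ ?_ hlam
    (hIQC T hT) hdissipation, by linarith⟩ <;>
    exact ContinuousOn.mono (by fun_prop) hIcc

/-- the dissipativity LMI with the passivity supply-rate matrix
`X = [[0, ½I], [½I, 0]]` implies
`∫₀ᵀ d(t)ᵀ e(t) dt ≥ x(T)ᵀPx(T) − x(0)ᵀPx(0) ≥ −x(0)ᵀPx(0)`. -/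
theorem statement4 {n nw nd nv : ℕ}
    (A : Matrix (Fin n) (Fin n) ℝ) (Bw : Matrix (Fin n) (Fin nw) ℝ)
    (Bd : Matrix (Fin n) (Fin nd) ℝ)
    (Cv : Matrix (Fin nv) (Fin n) ℝ) (Dvw : Matrix (Fin nv) (Fin nw) ℝ)
    (Dvd : Matrix (Fin nv) (Fin nd) ℝ)
    (Ce : Matrix (Fin nd) (Fin n) ℝ) (Dew : Matrix (Fin nd) (Fin nw) ℝ)
    (Ded : Matrix (Fin nd) (Fin nd) ℝ)
    (P : Matrix (Fin n) (Fin n) ℝ) (lam : ℝ)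
    (M : Matrix (Fin nv ⊕ Fin nw) (Fin nv ⊕ Fin nw) ℝ)
    (hP : P.PosSemidef) (hlam : 0 ≤ lam) (hM : M.IsSymm)
    (hLMI : DissLMI A Bw Bd Cv Dvw Dvd Ce Dew Ded P lam M
      (fromBlocks 0 (((1:ℝ)/2) • (1 : Matrix (Fin nd) (Fin nd) ℝ))
        (((1:ℝ)/2) • (1 : Matrix (Fin nd) (Fin nd) ℝ)) 0))
    (x : ℝ → Fin n → ℝ) (w : ℝ → Fin nw → ℝ) (d : ℝ → Fin nd → ℝ)
    (v : ℝ → Fin nv → ℝ) (e : ℝ → Fin nd → ℝ)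
    (hw : ContinuousOn w (Set.Ici 0)) (hd : ContinuousOn d (Set.Ici 0))
    (hx : ∀ t ∈ Set.Ici (0:ℝ),
      HasDerivWithinAt x (A *ᵥ x t + Bw *ᵥ w t + Bd *ᵥ d t) (Set.Ici 0) t)
    (hv : ∀ t, v t = Cv *ᵥ x t + Dvw *ᵥ w t + Dvd *ᵥ d t)
    (he : ∀ t, e t = Ce *ᵥ x t + Dew *ᵥ w t + Ded *ᵥ d t)
    (hIQC : ∀ T, 0 ≤ T → 0 ≤ ∫ t in (0:ℝ)..T,
      Sum.elim (v t) (w t) ⬝ᵥ M *ᵥ Sum.elim (v t) (w t)) :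
    ∀ T, 0 ≤ T →
      (x T ⬝ᵥ P *ᵥ x T - x 0 ⬝ᵥ P *ᵥ x 0 ≤ ∫ t in (0:ℝ)..T, d t ⬝ᵥ e t) ∧
      (-(x 0 ⬝ᵥ P *ᵥ x 0) ≤ x T ⬝ᵥ P *ᵥ x T - x 0 ⬝ᵥ P *ᵥ x 0) :=
  statement4_general A Bw Bd Cv Dvw Dvd Ce Dew Ded P lam M hP hlam hLMI x w d v e hw hd hx hv he
    hIQC
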